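/- Let k be a field of characteristic p > 0, let A = (Z/p)^n be an elementary abelian p-group, so kA ≅ k[x_1,…,x_n]/(x_1^p,…,x_n^p), and let α = (α_1,…,α_n) ∈ k^n be nonzero. Then the k-algebra homomorphism π_α : k[t]/(t^p) → k[x_1,…,x_n]/(x_1^p,…,x_n^p) determined by t ↦ Σ_i α_i x_i is well-defined and makes kA into a free (hence flat) module over k[t]/(t^p). -/

import Mathlib

/-!
In characteristic `p` the Frobenius is additive, so `(∑ αᵢ xᵢ)ᵖ = ∑ αᵢᵖ xᵢᵖ = 0` in
`kA = k[x₁,…,xₙ]/(xᵢᵖ)` and `t ↦ ∑ αᵢ xᵢ` is well defined.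
If `α_{i₀} ≠ 0`, the substitution `ψ : x_{i₀} ↦ ∑ αᵢ xᵢ` (fixing the other variables) is a
surjective endomorphism of the finite-dimensional algebra `kA` (its image contains every `xᵢ`, as
`α_{i₀} x_{i₀} = ψ(x_{i₀}) - ∑_{i ≠ i₀} αᵢ ψ(xᵢ)`), hence an automorphism. It carries
the monomial basis `x_{i₀}ʲ xᵐ` (exponents `< p`, `m` avoiding `i₀`) to the `k`-basis
`(∑ αᵢ xᵢ)ʲ ψ(xᵐ)`. As `1, t, …, tᵖ⁻¹` is a `k`-basis of `k[t]/(tᵖ)`, the `ψ(xᵐ)` form a basis of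
`kA` over `k[t]/(tᵖ)`.
-/

open MvPolynomial

namespace Module.Basis

variable {k R Q κ ι : Type*} [CommSemiring k] [Semiring R] [Algebra k R] [AddCommMonoid Q]
  [Module k Q] [Module R Q] [IsScalarTower k R Q]

theorem bijective_linearCombination_of_smulTower (s : Basis κ k R) (b : Basis (κ × ι) k Q)
    (U : ι → Q) (hb : ∀ j i, b (j, i) = s j • U i) :
    Function.Bijective (Finsupp.linearCombination R U) := by
  have h : (Finsupp.linearCombination R U).restrictScalars k =
      ((s.smulTower (Finsupp.basisSingleOne (ι := ι))).equiv b (Equiv.refl _)).toLinearMap :=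
    (s.smulTower (Finsupp.basisSingleOne (ι := ι))).ext fun ⟨j, i⟩ => by
      rw [LinearEquiv.coe_coe, equiv_apply, Equiv.refl_apply, hb]
      simp
  exact congrArg DFunLike.coe h ▸ LinearEquiv.bijective _

/-- The converse of `Module.Basis.smulTower`. -/
noncomputable def ofSMulTower (s : Basis κ k R) (b : Basis (κ × ι) k Q) (U : ι → Q)
    (hb : ∀ j i, b (j, i) = s j • U i) : Basis ι R Q :=
  .ofRepr (LinearEquiv.ofBijective _ (bijective_linearCombination_of_smulTower s b U hb)).symm

end Module.Basis

namespace Polynomial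

variable (R : Type*) [CommRing R] [Nontrivial R] (p : ℕ)

/-- `R[X] ⧸ (X ^ p)` is by definition `AdjoinRoot (X ^ p)`, whose power basis this is. -/
noncomputable def basisQuotientXPow :
    Module.Basis (Fin p) R (R[X] ⧸ Ideal.span {(X : R[X]) ^ p}) :=
  (AdjoinRoot.powerBasis' (monic_X_pow p)).basis.reindex (finCongr <| by simp)

theorem basisQuotientXPow_apply (j : Fin p) :
    basisQuotientXPow R p j = Ideal.Quotient.mk _ X ^ (j : ℕ) := by
  unfold basisQuotientXPow
  erw [Module.Basis.reindex_apply, PowerBasis.coe_basis]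
  rfl

end Polynomial

namespace MvPolynomial

section Semiring

variable {σ R : Type*} [CommSemiring R]

theorem coe_basisRestrictSupport_apply (s : Set (σ →₀ ℕ)) (d : s) :
    (basisRestrictSupport R s d : MvPolynomial σ R) = monomial d 1 := by
  classical
  suffices basisRestrictSupport R s d = ⟨monomial d 1, by simp⟩ from congrArg Subtype.val this
  rw [Module.Basis.apply_eq_iff]
  ext e
  change coeff e (monomial (d : σ →₀ ℕ) (1 : R)) = _
  simp [coeff_monomial, Finsupp.single_apply, Subtype.ext_iff]

theorem isCompl_restrictSupport (s : Set (σ →₀ ℕ)) :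
    IsCompl (restrictSupport R s) (restrictSupport R sᶜ) where
  disjoint := Submodule.disjoint_def.mpr fun f hs hsc => by
    rw [← support_eq_empty, ← Finset.coe_eq_empty, ← Set.subset_empty_iff,
      ← Set.inter_compl_self s]
    exact Set.subset_inter hs hsc
  codisjoint := codisjoint_iff.mpr <| by
    rw [restrictSupport_eq_span, restrictSupport_eq_span, ← Submodule.span_union,
      ← Set.image_union, Set.union_compl_self, ← restrictSupport_eq_span, restrictSupport_univ]

end Semiring

variable (σ R : Type*) [CommRing R] (p : ℕ)

noncomputable abbrev truncIdeal : Ideal (MvPolynomial σ R) :=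
  Ideal.span (Set.range fun i => X i ^ p)

theorem restrictScalars_truncIdeal :
    (truncIdeal σ R p).restrictScalars R = restrictSupport R {d | ∃ i, p ≤ d i} := by
  have : Set.range (fun i => (X i : MvPolynomial σ R) ^ p) =
      (monomial · 1) '' Set.range fun i => Finsupp.single i p := by
    rw [← Set.range_comp]
    simp only [X_pow_eq_monomial]
    rfl
  ext f
  rw [Submodule.restrictScalars_mem, truncIdeal, this, mem_ideal_span_monomial_image,
    mem_restrictSupport_iff]
  simp [Set.subset_def, Finsupp.single_le_iff]

noncomputable def truncExponentEquiv [Finite σ] :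
    ({d : σ →₀ ℕ | ∃ i, p ≤ d i}ᶜ : Set _) ≃ (σ → Fin p) where
  toFun d i := ⟨d.1 i, not_le.mp fun h => d.2 ⟨i, h⟩⟩
  invFun e := ⟨Finsupp.equivFunOnFinite.symm fun i => e i, by simp⟩
  left_inv d := by ext; simp
  right_inv e := by ext; simp

noncomputable def truncBasis [Finite σ] :
    Module.Basis (σ → Fin p) R (MvPolynomial σ R ⧸ truncIdeal σ R p) :=
  ((basisRestrictSupport R _).reindex (truncExponentEquiv σ p)).map
    ((Submodule.quotientEquivOfIsCompl _ _
      (restrictScalars_truncIdeal σ R p ▸ isCompl_restrictSupport _)).symm ≪≫ₗ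
      Submodule.Quotient.restrictScalarsEquiv R _)

theorem truncBasis_apply [Finite σ] (e : σ → Fin p) :
    truncBasis σ R p e =
      Ideal.Quotient.mk _ (monomial (Finsupp.equivFunOnFinite.symm fun i => (e i : ℕ)) 1) := by
  rw [truncBasis, Module.Basis.map_apply, Module.Basis.reindex_apply, LinearEquiv.trans_apply,
    Submodule.quotientEquivOfIsCompl_symm_apply, Submodule.Quotient.restrictScalarsEquiv_mk,
    coe_basisRestrictSupport_apply]
  rfl

instance [Finite σ] : Module.Finite R (MvPolynomial σ R ⧸ truncIdeal σ R p) :=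
  .of_basis (truncBasis σ R p)

theorem truncBasis_funSplitAt_symm [Finite σ] [DecidableEq σ] [NeZero p] (i : σ) (j : Fin p)
    (m : {l // l ≠ i} → Fin p) :
    truncBasis σ R p ((Equiv.funSplitAt i (Fin p)).symm (j, m)) =
      Ideal.Quotient.mk _ (X i) ^ (j : ℕ) *
        truncBasis σ R p ((Equiv.funSplitAt i (Fin p)).symm (0, m)) := by
  rw [truncBasis_apply, truncBasis_apply, ← map_pow, ← map_mul, X_pow_eq_monomial, monomial_mul,
    one_mul]
  refine congrArg (fun d => Ideal.Quotient.mk _ (monomial d 1)) (Finsupp.ext fun l => ?_)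
  by_cases h : l = i
  · subst h; simp
  · simp [h]

theorem sum_C_mul_X_pow_mem_truncIdeal [Fintype σ] [Fact p.Prime] [CharP R p] (c : σ → R) :
    (∑ i, C (c i) * X i) ^ p ∈ truncIdeal σ R p := by
  rw [sum_pow_char]
  refine Ideal.sum_mem _ fun i _ => ?_
  rw [mul_pow, ← map_pow]
  exact Ideal.mul_mem_left _ _ (Ideal.subset_span ⟨i, rfl⟩)

variable {σ R p}

theorem adjoin_range_mk_X (I : Ideal (MvPolynomial σ R)) :
    Algebra.adjoin R (Set.range fun i => Ideal.Quotient.mk I (X i)) = ⊤ := by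
  have : (Set.range fun i => Ideal.Quotient.mk I (X i)) =
      Ideal.Quotient.mkₐ R I '' Set.range X := by
    rw [← Set.range_comp]
    rfl
  rw [this, Algebra.adjoin_image, adjoin_range_X, Algebra.map_top, AlgHom.range_eq_top]
  exact Ideal.Quotient.mkₐ_surjective R I

noncomputable def truncLift {A : Type*} [CommSemiring A] [Algebra R A] (u : σ → A)
    (hu : ∀ i, u i ^ p = 0) : (MvPolynomial σ R ⧸ truncIdeal σ R p) →ₐ[R] A :=
  Ideal.Quotient.liftₐ _ (aeval u) fun _ ha => RingHom.mem_ker.mp <|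
    (Ideal.span_le (I := RingHom.ker (aeval u)).mpr (by rintro _ ⟨i, rfl⟩; simp [hu])) ha

@[simp]
theorem truncLift_mk_X {A : Type*} [CommSemiring A] [Algebra R A] (u : σ → A)
    (hu : ∀ i, u i ^ p = 0) (i : σ) :
    truncLift (R := R) u hu (Ideal.Quotient.mk _ (X i)) = u i :=
  aeval_X u i

section Subst

variable [Fintype σ] [DecidableEq σ] [Fact p.Prime] [CharP R p]

noncomputable def truncSubst (c : σ → R) (i : σ) :
    (MvPolynomial σ R ⧸ truncIdeal σ R p) →ₐ[R] MvPolynomial σ R ⧸ truncIdeal σ R p :=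
  truncLift (fun j => Ideal.Quotient.mk _ (Function.update X i (∑ l, C (c l) * X l) j))
    fun j => by
    rw [← map_pow, Ideal.Quotient.eq_zero_iff_mem]
    rcases eq_or_ne j i with rfl | h
    · simpa using sum_C_mul_X_pow_mem_truncIdeal σ R p c
    · simpa [h] using (Ideal.subset_span ⟨j, rfl⟩ : X j ^ p ∈ truncIdeal σ R p)

variable {c : σ → R} {i : σ}

theorem truncSubst_mk_X_self :
    truncSubst (p := p) c i (Ideal.Quotient.mk _ (X i)) =
      Ideal.Quotient.mk _ (∑ l, C (c l) * X l) := by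
  simp [truncSubst]

theorem truncSubst_mk_X_of_ne {j : σ} (h : j ≠ i) :
    truncSubst (p := p) c i (Ideal.Quotient.mk _ (X j)) = Ideal.Quotient.mk _ (X j) := by
  simp [truncSubst, h]

theorem truncSubst_surjective (hc : IsUnit (c i)) :
    Function.Surjective (truncSubst (p := p) c i) := by
  set f := truncSubst (p := p) c i
  let x : σ → MvPolynomial σ R ⧸ truncIdeal σ R p := fun l => Ideal.Quotient.mk _ (X l)
  have hx : ∀ l, c l • x l = Ideal.Quotient.mk _ (C (c l) * X l) := fun l => by
    rw [C_mul']
    exact (map_smul (Ideal.Quotient.mkₐ R (truncIdeal σ R p)) (c l) (X l)).symm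
  have hself : c i • x i = f (x i) - ∑ l ∈ Finset.univ.erase i, c l • f (x l) := by
    rw [truncSubst_mk_X_self, eq_sub_iff_add_eq, ← Finset.univ.add_sum_erase _ (Finset.mem_univ i),
      map_add, map_sum, hx]
    congr 1
    refine Finset.sum_congr rfl fun l hl => ?_
    rw [truncSubst_mk_X_of_ne (Finset.ne_of_mem_erase hl), hx]
  have hself_mem : c i • x i ∈ f.range := hself ▸
    sub_mem (f.mem_range_self _) (sum_mem fun l _ => Subalgebra.smul_mem _ (f.mem_range_self _) _)
  rw [← AlgHom.range_eq_top, eq_top_iff, ← adjoin_range_mk_X, Algebra.adjoin_le_iff]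
  rintro _ ⟨j, rfl⟩
  rcases eq_or_ne j i with rfl | h
  · simpa [smul_smul] using f.range.smul_mem hself_mem ↑hc.unit⁻¹
  · exact ⟨_, truncSubst_mk_X_of_ne h⟩

noncomputable def truncSubstEquiv (hc : IsUnit (c i)) :
    (MvPolynomial σ R ⧸ truncIdeal σ R p) ≃ₐ[R] MvPolynomial σ R ⧸ truncIdeal σ R p :=
  .ofBijective (truncSubst c i) <|
    OrzechProperty.bijective_of_surjective_endomorphism (truncSubst c i).toLinearMap
      (truncSubst_surjective hc)

end Subst

end MvPolynomial

/-- For `k` a field of characteristic `p > 0`, `kA = k[x₁,…,xₙ]/(xᵢᵖ)` and `0 ≠ α ∈ kⁿ`,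
the π-point `π_α : k[t]/(tᵖ) → kA`, `t ↦ ∑ αᵢ xᵢ`, is a well-defined `k`-algebra
homomorphism, and it makes `kA` a free (hence flat) module over `k[t]/(tᵖ)`. -/
theorem pi_point_well_defined_and_flat
    (k : Type*) [Field k] (p : ℕ) [Fact p.Prime] [CharP k p]
    (n : ℕ) (α : Fin n → k) (hα : α ≠ 0) :
    ∃ φ : (Polynomial k ⧸ Ideal.span {(Polynomial.X : Polynomial k) ^ p}) →ₐ[k]
          (MvPolynomial (Fin n) k ⧸
            Ideal.span (Set.range fun i : Fin n => (MvPolynomial.X i : MvPolynomial (Fin n) k) ^ p)),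
      φ (Ideal.Quotient.mk _ Polynomial.X) =
          Ideal.Quotient.mk _ (∑ i : Fin n, MvPolynomial.C (α i) * MvPolynomial.X i) ∧
      (letI := φ.toRingHom.toAlgebra
       letI := Algebra.toModule (R := Polynomial k ⧸ Ideal.span {(Polynomial.X : Polynomial k) ^ p})
         (A := MvPolynomial (Fin n) k ⧸
           Ideal.span (Set.range fun i : Fin n => (MvPolynomial.X i : MvPolynomial (Fin n) k) ^ p))
       Module.Free (Polynomial k ⧸ Ideal.span {(Polynomial.X : Polynomial k) ^ p})
        (MvPolynomial (Fin n) k ⧸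
          Ideal.span (Set.range fun i : Fin n => (MvPolynomial.X i : MvPolynomial (Fin n) k) ^ p)) ∧
       Module.Flat (Polynomial k ⧸ Ideal.span {(Polynomial.X : Polynomial k) ^ p})
        (MvPolynomial (Fin n) k ⧸
          Ideal.span (Set.range fun i : Fin n => (MvPolynomial.X i : MvPolynomial (Fin n) k) ^ p))) := by
  classical
  obtain ⟨i₀, hi₀⟩ := Function.ne_iff.mp hα
  set y := Ideal.Quotient.mk (truncIdeal (Fin n) k p) (∑ i, C (α i) * X i)
  have hy : y ^ p = 0 := by
    rw [← map_pow, Ideal.Quotient.eq_zero_iff_mem]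
    exact sum_C_mul_X_pow_mem_truncIdeal _ _ _ α
  let φ : (Polynomial k ⧸ Ideal.span {(Polynomial.X : Polynomial k) ^ p}) →ₐ[k] _ :=
    AdjoinRoot.liftAlgHom (Polynomial.X ^ p) (Algebra.ofId k _) y (by simp [hy])
  refine ⟨φ, AdjoinRoot.liftAlgHom_root .., ?_⟩
  let := φ.toRingHom.toAlgebra
  have := IsScalarTower.of_algHom φ
  let ψ := truncSubstEquiv (p := p) (c := α) (i := i₀) hi₀.isUnit
  let b := ((truncBasis (Fin n) k p).reindex (Equiv.funSplitAt i₀ (Fin p))).map ψ.toLinearEquiv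
  have hb : ∀ j m, b (j, m) = Polynomial.basisQuotientXPow k p j •
      ψ (truncBasis _ _ _ ((Equiv.funSplitAt i₀ (Fin p)).symm (0, m))) := fun j m => by
    rw [Module.Basis.map_apply, Module.Basis.reindex_apply, truncBasis_funSplitAt_symm,
      AlgEquiv.toLinearEquiv_apply, map_mul, map_pow, Algebra.smul_def,
      RingHom.algebraMap_toAlgebra, Polynomial.basisQuotientXPow_apply, AlgHom.toRingHom_eq_coe,
      RingHom.coe_coe, map_pow]
    congr 2
    exact truncSubst_mk_X_self.trans (AdjoinRoot.liftAlgHom_root ..).symm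
  have : Module.Free _ _ := .of_basis (.ofSMulTower (Polynomial.basisQuotientXPow k p) b _ hb)
  exact ⟨this, inferInstance⟩
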